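/- Saddle-point value for the binary Hamming gap: define φ(H,α) = (1/2 − 1/α)·H + (1/α)·log₂(1 + 2^{−α}) for H ∈ [0,1] and α > 0. Then sup_{H∈[0,1]} inf_{α>0} φ(H,α) = inf_{α>0} sup_{H∈[0,1]} φ(H,α) = (1/2)·log₂(5/4), and for every H ∈ [0,1] the value φ(H,2) equals (1/2)·log₂(5/4). -/
import Mathlib

noncomputable section

/-- `φ(H,α) = (1/2 − 1/α)·H + (1/α)·log₂(1 + 2^{−α})`. -/
def phiHam (H α : ℝ) : ℝ :=
  (1 / 2 - 1 / α) * H + (1 / α) * Real.logb 2 (1 + (2:ℝ) ^ (-α))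

private lemma logb_two_four : Real.logb 2 (4:ℝ) = 2 := by
  rw [show (4:ℝ) = 2 ^ (2:ℕ) by norm_num, Real.logb_pow,
    Real.logb_self_eq_one (by norm_num)]
  norm_num

/-- Value at the saddle `α = 2`. -/
private lemma phi_at_two (H : ℝ) : phiHam H 2 = (1 / 2) * Real.logb 2 (5 / 4) := by
  have h : (2:ℝ) ^ (-(2:ℝ)) = 1/4 := by
    rw [show (-(2:ℝ)) = ((-2 : ℤ) : ℝ) by norm_num, Real.rpow_intCast]
    norm_num
  rw [phiHam, h]
  norm_num

/-- The saddle health value `H* = log₂(5/4) + 2/5` lies in `[0,1]`. -/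
private lemma Hstar_mem : Real.logb 2 (5/4) + 2/5 ∈ Set.Icc (0:ℝ) 1 := by
  have h0 : 0 ≤ Real.logb 2 (5/4 : ℝ) := Real.logb_nonneg (by norm_num) (by norm_num)
  have h1 : Real.logb 2 (5/4 : ℝ) ≤ 3/5 := by
    have h5 : Real.logb 2 ((5/4 : ℝ) ^ (5:ℕ)) ≤ Real.logb 2 ((2:ℝ) ^ (3:ℕ)) := by
      apply Real.logb_le_logb_of_le (by norm_num) (by positivity)
      norm_num
    rw [Real.logb_pow, Real.logb_pow,
      Real.logb_self_eq_one (by norm_num)] at h5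
    push_cast at h5
    linarith
  constructor <;> [linarith; linarith]

/-- Key lower bound: `φ(H*, α) ≥ (1/2)·log₂(5/4)` for all `α > 0`. -/
private lemma key (α : ℝ) (hα : 0 < α) :
    (1/2) * Real.logb 2 (5/4) ≤ phiHam (Real.logb 2 (5/4) + 2/5) α := by
  set t : ℝ := (2:ℝ) ^ (-α) with ht
  have ht0 : (0:ℝ) < t := Real.rpow_pos_of_pos (by norm_num) _
  have hlogt : Real.logb 2 t = -α := Real.logb_rpow (by norm_num) (by norm_num)
  -- polynomial inequality : 4t ≤ ((4/5)(1+t))^5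
  have hpoly : (4:ℝ) * t ≤ ((4/5) * (1+t)) ^ (5:ℕ) := by
    have key : (0:ℝ) ≤ (4*t-1)^2 * (64*t^3+352*t^2+812*t+1024) := by positivity
    nlinarith [key, ht0.le]
  have hlog : Real.logb 2 (4*t) ≤ 5 * Real.logb 2 ((4/5) * (1+t)) := by
    have := Real.logb_le_logb_of_le (b := 2) (by norm_num)
      (show (0:ℝ) < 4*t by positivity) hpoly
    rwa [Real.logb_pow] at this
    
  have e1 : Real.logb 2 (4*t) = 2 - α := by
    rw [Real.logb_mul (by norm_num) (ne_of_gt ht0), logb_two_four, hlogt]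
    ring
  have e2 : Real.logb 2 ((4/5) * (1+t))
      = Real.logb 2 (1+t) - Real.logb 2 (5/4) := by
    rw [Real.logb_mul (by norm_num) (by positivity),
      show (4/5 : ℝ) = (5/4 : ℝ)⁻¹ by norm_num, Real.logb_inv]
    ring
  rw [e1, e2] at hlog
  -- now conclude by algebra
  have hα' : α ≠ 0 := ne_of_gt hα
  rw [phiHam, ← sub_nonneg]
  have expand : (1 / 2 - 1 / α) * (Real.logb 2 (5/4) + 2/5)
      + 1 / α * Real.logb 2 (1 + t) - 1/2 * Real.logb 2 (5/4)
      = (1/α) * ((Real.logb 2 (1+t) - Real.logb 2 (5/4)) - (2 - α)/5) := by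
    field_simp
    ring
  rw [show (1 + (2:ℝ) ^ (-α)) = 1 + t from rfl, expand]
  apply mul_nonneg (by positivity)
  linarith

/-- Uniform lower bound `φ(H,α) ≥ -1` on the domain. -/
private lemma phi_lb (H : ℝ) (hH : H ∈ Set.Icc (0:ℝ) 1) (α : ℝ) (hα : 0 < α) :
    (-1 : ℝ) ≤ phiHam H α := by
  obtain ⟨hH0, hH1⟩ := hH
  set t : ℝ := (2:ℝ) ^ (-α) with ht
  have ht0 : (0:ℝ) < t := Real.rpow_pos_of_pos (by norm_num) _
  have ht1 : t ≤ 1 := by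
    apply Real.rpow_le_one_of_one_le_of_nonpos (by norm_num) (by linarith)
  have hlb : 1 - α ≤ Real.logb 2 (1+t) := by
    have h2t : (2:ℝ) ^ (1 - α) ≤ 1 + t := by
      rw [show (1 - α : ℝ) = 1 + (-α) by ring, Real.rpow_add (by norm_num),
        Real.rpow_one]
      linarith [ht0]
    calc (1 - α : ℝ) = Real.logb 2 ((2:ℝ) ^ (1-α)) :=
          (Real.logb_rpow (by norm_num) (by norm_num)).symm
      _ ≤ Real.logb 2 (1+t) :=
          Real.logb_le_logb_of_le (by norm_num) (Real.rpow_pos_of_pos (by norm_num) _) h2t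
  rw [phiHam]
  have h1 : (1/α) * (1 - α) ≤ (1/α) * Real.logb 2 (1 + t) :=
    mul_le_mul_of_nonneg_left hlb (by positivity)
  have h2 : (1/α) * (1 - α) = 1/α - 1 := by field_simp
  have h3 : (1/α) * H ≤ (1/α) * 1 := mul_le_mul_of_nonneg_left hH1 (by positivity)
  nlinarith [h1, h3, mul_nonneg hH0 (le_of_lt (show (0:ℝ) < 1/α by positivity))]

/-- Uniform upper bound `φ(H,α) ≤ 1/2 + 1/α` for `H ∈ [0,1]`, `α > 0`. -/
private lemma phi_ub (H : ℝ) (hH : H ∈ Set.Icc (0:ℝ) 1) (α : ℝ) (hα : 0 < α) :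
    phiHam H α ≤ 1/2 + 1/α := by
  obtain ⟨hH0, hH1⟩ := hH
  set t : ℝ := (2:ℝ) ^ (-α) with ht
  have ht0 : (0:ℝ) < t := Real.rpow_pos_of_pos (by norm_num) _
  have ht1 : t ≤ 1 := by
    apply Real.rpow_le_one_of_one_le_of_nonpos (by norm_num) (by linarith)
  have hub : Real.logb 2 (1+t) ≤ 1 := by
    calc Real.logb 2 (1+t) ≤ Real.logb 2 2 :=
          Real.logb_le_logb_of_le (by norm_num) (by linarith) (by linarith)
      _ = 1 := Real.logb_self_eq_one (by norm_num)
  rw [phiHam]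
  have h1 : (1/α) * Real.logb 2 (1+t) ≤ (1/α) * 1 :=
    mul_le_mul_of_nonneg_left hub (by positivity)
  nlinarith [mul_nonneg hH0 (le_of_lt (show (0:ℝ) < 1/α by positivity)),
    mul_le_mul_of_nonneg_left hH1 (show (0:ℝ) ≤ 1/2 by norm_num)]

/-- **Saddle-point value for the binary Hamming gap**:
`sup_{H∈[0,1]} inf_{α>0} φ(H,α) = inf_{α>0} sup_{H∈[0,1]} φ(H,α) = (1/2)·log₂(5/4)`,
and `φ(H,2) = (1/2)·log₂(5/4)` for every `H ∈ [0,1]`. -/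
theorem binary_hamming_saddle_point :
    sSup ((fun H => sInf ((fun α => phiHam H α) '' Set.Ioi (0:ℝ))) '' Set.Icc (0:ℝ) 1) =
        (1 / 2) * Real.logb 2 (5 / 4) ∧
    sInf ((fun α => sSup ((fun H => phiHam H α) '' Set.Icc (0:ℝ) 1)) '' Set.Ioi (0:ℝ)) =
        (1 / 2) * Real.logb 2 (5 / 4) ∧
    ∀ H ∈ Set.Icc (0:ℝ) 1, phiHam H 2 = (1 / 2) * Real.logb 2 (5 / 4) := by
  set c : ℝ := (1/2) * Real.logb 2 (5/4) with hc
  have hcc : (1 / 2 : ℝ) * Real.logb 2 (5 / 4) = c := rfl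
  refine ⟨?_, ?_, fun H _ => phi_at_two H⟩
  · -- sup inf
    apply le_antisymm
    · apply csSup_le ((Set.nonempty_Icc.mpr (by norm_num)).image _)
      rintro _ ⟨H, hH, rfl⟩
      calc sInf ((fun α => phiHam H α) '' Set.Ioi (0:ℝ))
            ≤ phiHam H 2 := csInf_le
              ⟨-1, by rintro _ ⟨α, hα, rfl⟩; exact phi_lb H hH α hα⟩
              ⟨2, by norm_num, rfl⟩
        _ = c := phi_at_two H
    · have hmem : sInf ((fun α => phiHam (Real.logb 2 (5/4) + 2/5) α) '' Set.Ioi (0:ℝ))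
          ∈ (fun H => sInf ((fun α => phiHam H α) '' Set.Ioi (0:ℝ))) '' Set.Icc (0:ℝ) 1 :=
        ⟨_, Hstar_mem, rfl⟩
      have hbdd : BddAbove
          ((fun H => sInf ((fun α => phiHam H α) '' Set.Ioi (0:ℝ))) '' Set.Icc (0:ℝ) 1) := by
        refine ⟨c, ?_⟩
        rintro _ ⟨H, hH, rfl⟩
        calc sInf ((fun α => phiHam H α) '' Set.Ioi (0:ℝ))
              ≤ phiHam H 2 := csInf_le
                ⟨-1, by rintro _ ⟨α, hα, rfl⟩; exact phi_lb H hH α hα⟩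
                ⟨2, by norm_num, rfl⟩
          _ = c := phi_at_two H
      refine le_trans ?_ (le_csSup hbdd hmem)
      apply le_csInf (((Set.nonempty_Ioi (a := (0:ℝ))).image _))
      rintro _ ⟨α, hα, rfl⟩
      exact key α hα
  · -- inf sup
    apply le_antisymm
    · calc sInf ((fun α => sSup ((fun H => phiHam H α) '' Set.Icc (0:ℝ) 1)) '' Set.Ioi (0:ℝ))
          ≤ sSup ((fun H => phiHam H 2) '' Set.Icc (0:ℝ) 1) := by
            refine csInf_le ⟨c, ?_⟩ ⟨2, by norm_num, rfl⟩
            rintro _ ⟨α, hα, rfl⟩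
            calc c ≤ phiHam (Real.logb 2 (5/4) + 2/5) α := key α hα
              _ ≤ sSup ((fun H => phiHam H α) '' Set.Icc (0:ℝ) 1) := le_csSup
                ⟨1/2 + 1/α, by rintro _ ⟨H, hH, rfl⟩; exact phi_ub H hH α hα⟩
                ⟨_, Hstar_mem, rfl⟩
        _ ≤ c := by
            apply csSup_le ((Set.nonempty_Icc.mpr (by norm_num)).image _)
            rintro _ ⟨H, _, rfl⟩
            exact le_of_eq (phi_at_two H)
    · apply le_csInf (((Set.nonempty_Ioi (a := (0:ℝ))).image _))
      rintro _ ⟨α, hα, rfl⟩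
      calc c ≤ phiHam (Real.logb 2 (5/4) + 2/5) α := key α hα
        _ ≤ sSup ((fun H => phiHam H α) '' Set.Icc (0:ℝ) 1) := le_csSup
          ⟨1/2 + 1/α, by rintro _ ⟨H, hH, rfl⟩; exact phi_ub H hH α hα⟩
          ⟨_, Hstar_mem, rfl⟩

end
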